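/- arXiv:1301.5263 — 2 statements merged into one kernel-verified Lean document; each statement's English description precedes it below -/
import Mathlib

section
/- Let s be an aperiodic standard episturmian word over a finite alphabet A, and let s = U_1 U_2 ⋯ be a factorization of s where each U_i is a non-empty prefix of s. Then there exist indices i ≠ j such that U_i and U_j end in different letters. -/
/-- A finite word `u` is a factor of the infinite word `s` over the alphabet `A`. -/
def FactorOf {A : Type*} (s : ℕ → A) (u : List A) : Prop :=
  ∃ i : ℕ, u = (List.range u.length).map fun k => s (i + k)

/-- `u` is a (finite) prefix of the infinite word `s`. -/
def PrefixOf {A : Type*} (s : ℕ → A) (u : List A) : Prop :=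
  u = (List.range u.length).map s

def EventuallyPeriodic {A : Type*} (s : ℕ → A) : Prop :=
  ∃ p > 0, ∃ N, ∀ n ≥ N, s (n + p) = s n

/-- `s` is standard episturmian: its factors are closed under reversal and every
left special factor of `s` is a prefix of `s`. -/
def StandardEpisturmian {A : Type*} (s : ℕ → A) : Prop :=
  (∀ u, FactorOf s u → FactorOf s u.reverse) ∧
  (∀ u : List A, (∃ x y : A, x ≠ y ∧ FactorOf s (x :: u) ∧ FactorOf s (y :: u)) →
    PrefixOf s u)

/-- `s = U 0 ++ U 1 ++ ⋯` with all the `U i` non-empty. -/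
def Factorization {A : Type*} (s : ℕ → A) (U : ℕ → List A) : Prop :=
  (∀ i, U i ≠ []) ∧ ∀ n, PrefixOf s (((List.range n).map U).flatten)

namespace StmtAux
variable {A : Type*}

def win (s : ℕ → A) (i n : ℕ) : List A := (List.range n).map fun k => s (i + k)

@[simp] lemma win_length (s : ℕ → A) (i n : ℕ) : (win s i n).length = n := by simp [win]

lemma win_get? (s : ℕ → A) (i n j : ℕ) :
    (win s i n)[j]? = if j < n then some (s (i + j)) else none := by
  by_cases h : j < n
  · simp [win, List.getElem?_map, List.getElem?_range h, h]
  · rw [List.getElem?_eq_none (by simp; omega), if_neg h]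

lemma eq_win_iff {s : ℕ → A} {u : List A} {i n : ℕ} :
    u = win s i n ↔ u.length = n ∧ ∀ j, j < n → u[j]? = some (s (i + j)) := by
  constructor
  · rintro rfl
    exact ⟨by simp, fun j hj => by rw [win_get?, if_pos hj]⟩
  · rintro ⟨hl, h⟩
    apply List.ext_getElem?
    intro j
    by_cases hj : j < n
    · rw [h j hj, win_get?, if_pos hj]
    · rw [win_get?, if_neg hj, List.getElem?_eq_none (by omega)]

lemma win_zero (s : ℕ → A) (i : ℕ) : win s i 0 = [] := rfl

lemma win_one (s : ℕ → A) (i : ℕ) : win s i 1 = [s i] := by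
  rw [eq_comm, eq_win_iff]
  refine ⟨rfl, fun j hj => ?_⟩
  interval_cases j
  · simp

lemma win_add (s : ℕ → A) (i m n : ℕ) :
    win s i (m + n) = win s i m ++ win s (i + m) n := by
  rw [eq_comm, eq_win_iff]
  refine ⟨by simp, fun j hj => ?_⟩
  by_cases h : j < m
  · rw [List.getElem?_append, if_pos (by simpa using h), win_get?, if_pos h]
  · rw [List.getElem?_append, if_neg (by simp; omega)]
    rw [win_length, win_get?, if_pos (by omega)]
    congr 2
    omega

lemma win_succ (s : ℕ → A) (i n : ℕ) :
    win s i (n + 1) = win s i n ++ [s (i + n)] := by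
  rw [win_add, win_one]

lemma win_succ' (s : ℕ → A) (i n : ℕ) :
    win s i (n + 1) = s i :: win s (i + 1) n := by
  have := win_add s i 1 n
  rw [win_one] at this
  rw [show n + 1 = 1 + n by omega, this]
  rfl

lemma win_split {s : ℕ → A} {u v : List A} {i : ℕ}
    (h : u ++ v = win s i (u.length + v.length)) :
    u = win s i u.length ∧ v = win s (i + u.length) v.length := by
  rw [win_add] at h
  have := List.append_inj h (by simp)
  tauto


section Words
variable {s : ℕ → A}

lemma factorOf_iff {u : List A} : FactorOf s u ↔ ∃ i, u = win s i u.length := Iff.rfl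

lemma factorOf_of_win {u : List A} {i n : ℕ} (hn : u.length = n) (h : u = win s i n) :
    FactorOf s u := ⟨i, by rw [hn]; exact h⟩

lemma factorOf_win (s : ℕ → A) (i n : ℕ) : FactorOf s (win s i n) :=
  factorOf_of_win (win_length s i n) rfl

lemma win_map (s : ℕ → A) (n : ℕ) : win s 0 n = (List.range n).map s :=
  List.map_congr_left (fun k _ => by rw [Nat.zero_add])

lemma prefixOf_iff {u : List A} : PrefixOf s u ↔ u = win s 0 u.length := by
  unfold PrefixOf
  rw [win_map]

lemma prefixOf_of_win {u : List A} {n : ℕ} (hn : u.length = n) (h : u = win s 0 n) :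
    PrefixOf s u := by rw [prefixOf_iff, hn]; exact h

lemma prefixOf_win (s : ℕ → A) (n : ℕ) : PrefixOf s (win s 0 n) :=
  prefixOf_of_win (win_length s 0 n) rfl

lemma factor_tail {x : A} {u : List A} (h : FactorOf s (x :: u)) : FactorOf s u := by
  obtain ⟨i, hi⟩ := h
  have hi' : x :: u = win s i (u.length + 1) := hi
  rw [win_succ'] at hi'
  exact ⟨i + 1, ((List.cons.injEq _ _ _ _).mp hi').2⟩

lemma factor_two (s : ℕ → A) (i : ℕ) : FactorOf s [s i, s (i + 1)] := by
  apply factorOf_of_win (n := 2) (by rfl)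
  rw [show (2:ℕ) = 1 + 1 from rfl, win_add, win_one, win_one]
  rfl

lemma left_unique (hstd : StandardEpisturmian s) {u : List A} (hu : ¬ PrefixOf s u)
    {x y : A} (hx : FactorOf s (x :: u)) (hy : FactorOf s (y :: u)) : x = y := by
  by_contra hne
  exact hu (hstd.2 u ⟨x, y, hne, hx, hy⟩)

lemma not_prefix_singleton {z : A} (hz : z ≠ s 0) : ¬ PrefixOf s [z] := by
  rw [prefixOf_iff]
  intro h
  rw [show ([z] : List A).length = 1 from rfl, win_one] at h
  exact hz ((List.cons.injEq _ _ _ _).mp h).1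

/-- The first letter is separating. -/
lemma separating (hstd : StandardEpisturmian s) (i : ℕ) : s i = s 0 ∨ s (i + 1) = s 0 := by
  by_contra hcon
  push_neg at hcon
  obtain ⟨hy, hz⟩ := hcon
  have hnpz : ¬ PrefixOf s [s (i+1)] := not_prefix_singleton hz
  have hnpy : ¬ PrefixOf s [s i] := not_prefix_singleton hy
  -- A1 : any occurrence of (s (i+1)) is preceded by s i
  have A1 : ∀ q, s (q + 1) = s (i+1) → s q = s i := by
    intro q hq
    have h1 : FactorOf s [s q, s (i+1)] := hq ▸ factor_two s q
    exact left_unique hstd hnpz h1 (factor_two s i)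
  -- [s (i+1), s i] is a factor
  have hzy : FactorOf s [s (i+1), s i] := by
    have := hstd.1 [s i, s (i+1)] (factor_two s i)
    simpa using this
  -- A3 : any occurrence of (s i) is preceded by s (i+1)
  have A3 : ∀ q, s (q + 1) = s i → s q = s (i+1) := by
    intro q hq
    obtain ⟨i', hi'⟩ := hzy
    have hi2 : [s (i+1), s i] = win s i' 2 := hi'
    rw [show (2:ℕ) = 1 + 1 from rfl, win_add, win_one, win_one] at hi2
    have e1 : s (i+1) = s i' := ((List.cons.injEq _ _ _ _).mp hi2).1
    have e2 : s i = s (i' + 1) := by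
      have := ((List.cons.injEq _ _ _ _).mp hi2).2
      exact ((List.cons.injEq _ _ _ _).mp this).1
    have h1 : FactorOf s [s q, s i] := hq ▸ factor_two s q
    have h2 : FactorOf s [s (i+1), s i] := by rw [e1, e2]; exact factor_two s i'
    exact left_unique hstd hnpy h1 h2
  have A4 : ∀ q, s q ≠ s i ∧ s q ≠ s (i+1) := by
    intro q
    induction q with
    | zero => exact ⟨fun h => hy h.symm, fun h => hz h.symm⟩
    | succ q ih =>
      exact ⟨fun h => ih.2 (A3 q h), fun h => ih.1 (A1 q h)⟩
  exact (A4 i).1 rfl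

/-- no m+2 consecutive occurrences of the first letter, where m = first non-(s 0) position -/
lemma no_long_run (hstd : StandardEpisturmian s) {m : ℕ}
    (hm : ∀ i, i < m → s i = s 0) (hb : s m ≠ s 0) :
    ∀ q, ¬ (∀ j, j < m + 2 → s (q + j) = s 0) := by
  intro q0 hrun
  set u : List A := List.replicate (m + 1) (s 0) with hu
  have hulen : u.length = m + 1 := by simp [hu]
  have hOwin : ∀ q, (∀ j, j < m + 1 → s (q + j) = s 0) → u = win s q (m+1) := by
    intro q h
    rw [eq_win_iff]
    refine ⟨hulen, fun j hj => ?_⟩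
    rw [h j hj, hu, List.getElem?_replicate, if_pos hj]
  have hnp : ¬ PrefixOf s u := by
    rw [prefixOf_iff, hulen, eq_win_iff]
    rintro ⟨-, h⟩
    have h2 := h m (by omega)
    rw [hu, List.getElem?_replicate, if_pos (by omega)] at h2
    have h3 : s 0 = s (0 + m) := by simpa using h2
    rw [Nat.zero_add] at h3
    exact hb h3.symm
  have hwit : FactorOf s (s 0 :: u) := by
    apply factorOf_of_win (n := (m+1)+1) (by simp [hu])
    have h0 : s q0 = s 0 := by have := hrun 0 (by omega); simpa using this
    have h1 : u = win s (q0+1) (m+1) := hOwin (q0+1) (fun j hj => by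
      rw [show q0 + 1 + j = q0 + (j+1) by omega]
      exact hrun (j+1) (by omega))
    rw [win_succ', ← h1, h0]
  have hdesc : ∀ q, ¬ (∀ j, j < m + 1 → s (q + j) = s 0) := by
    intro q
    induction q with
    | zero =>
      intro h
      have := h m (by omega)
      rw [Nat.zero_add] at this
      exact hb this
    | succ q ih =>
      intro h
      apply ih
      have hfq : FactorOf s (s q :: u) := by
        apply factorOf_of_win (n := (m+1)+1) (by simp [hu])
        rw [win_succ', ← hOwin (q+1) h]
      have hqa : s q = s 0 := left_unique hstd hnp hfq hwit
      intro j hj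
      rcases Nat.eq_zero_or_pos j with hj0 | hjpos
      · subst hj0; simpa using hqa
      · rw [show q + j = q + 1 + (j - 1) by omega]
        exact h (j-1) (by omega)
  exact hdesc q0 (fun j hj => hrun j (by omega))

end Words

section Der
open Classical in
noncomputable def tf (s : ℕ → A) : ℕ → ℕ
  | 0 => 0
  | r+1 => if s (tf s r + 1) = s 0 then tf s r + 1 else tf s r + 2

open Classical in
noncomputable def der (s : ℕ → A) (r : ℕ) : A :=
  if s (tf s r + 1) = s 0 then s 0 else s (tf s r + 1)

variable {s : ℕ → A}

lemma tf_zero : tf s 0 = 0 := rfl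

lemma tf_succ_pos (h : s (tf s r + 1) = s 0) : tf s (r+1) = tf s r + 1 := by
  rw [tf, if_pos h]

lemma tf_succ_neg (h : s (tf s r + 1) ≠ s 0) : tf s (r+1) = tf s r + 2 := by
  rw [tf, if_neg h]

lemma der_pos (h : s (tf s r + 1) = s 0) : der s r = s 0 := by
  rw [der, if_pos h]

lemma der_neg (h : s (tf s r + 1) ≠ s 0) : der s r = s (tf s r + 1) := by
  rw [der, if_neg h]

lemma tf_lt_succ (r : ℕ) : tf s r < tf s (r + 1) := by
  by_cases h : s (tf s r + 1) = s 0
  · rw [tf_succ_pos h]; omega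
  · rw [tf_succ_neg h]; omega

lemma tf_le_succ2 (r : ℕ) : tf s (r + 1) ≤ tf s r + 2 := by
  by_cases h : s (tf s r + 1) = s 0
  · rw [tf_succ_pos h]; omega
  · rw [tf_succ_neg h]

lemma tf_mono : StrictMono (tf s) := strictMono_nat_of_lt_succ tf_lt_succ

lemma tf_le_of_le {r r' : ℕ} (h : r ≤ r') : tf s r ≤ tf s r' := tf_mono.le_iff_le.2 h

lemma le_tf (r : ℕ) : r ≤ tf s r := by
  induction r with
  | zero => omega
  | succ r ih => have := tf_lt_succ (s := s) r; omega

lemma der_eq_iff : der s r = s 0 ↔ s (tf s r + 1) = s 0 := by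
  constructor
  · intro h
    by_contra hn
    rw [der_neg hn] at h
    exact hn h
  · exact der_pos

lemma tf_start (hsep : ∀ i, s i = s 0 ∨ s (i + 1) = s 0) (r : ℕ) : s (tf s r) = s 0 := by
  induction r with
  | zero => rfl
  | succ r ih =>
    by_cases h : s (tf s r + 1) = s 0
    · rw [tf_succ_pos h]; exact h
    · rw [tf_succ_neg h]
      rcases hsep (tf s r + 1) with h' | h'
      · exact absurd h' h
      · exact h'

/-- generic coverage lemma -/
lemma exists_block {f : ℕ → ℕ} (h0 : f 0 = 0) (hlt : ∀ k, f k < f (k+1)) (q : ℕ) :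
    ∃ k, f k ≤ q ∧ q < f (k + 1) := by
  induction q with
  | zero => exact ⟨0, by omega, by have := hlt 0; omega⟩
  | succ q ih =>
    obtain ⟨k, h1, h2⟩ := ih
    by_cases h : q + 1 < f (k + 1)
    · exact ⟨k, by omega, h⟩
    · exact ⟨k + 1, by omega, by have := hlt (k+1); omega⟩

lemma tf_surj (hq : s q = s 0) : ∃ r, tf s r = q := by
  obtain ⟨r, h1, h2⟩ := exists_block (f := tf s) tf_zero tf_lt_succ q
  by_cases h : s (tf s r + 1) = s 0
  · rw [tf_succ_pos h] at h2
    exact ⟨r, by omega⟩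
  · rw [tf_succ_neg h] at h2
    rcases (by omega : q = tf s r ∨ q = tf s r + 1) with h' | h'
    · exact ⟨r, h'.symm⟩
    · rw [h'] at hq; exact absurd hq h

end Der

section La
open Classical
noncomputable def La (a : A) (v : List A) : List A :=
  v.flatMap fun y => if y = a then [a] else [a, y]

variable {a : A}

lemma La_nil : La a ([] : List A) = [] := rfl

lemma La_cons (y : A) (v : List A) :
    La a (y :: v) = (if y = a then [a] else [a, y]) ++ La a v := by
  simp [La]

lemma La_append (u v : List A) : La a (u ++ v) = La a u ++ La a v := by
  simp [La]

lemma La_singleton_pos : La a [a] = [a] := by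
  simp [La]

lemma La_singleton_neg {c : A} (h : c ≠ a) : La a [c] = [a, c] := by
  simp [La, h]

lemma La_length_ge (v : List A) : v.length ≤ (La a v).length := by
  induction v with
  | nil => simp [La_nil]
  | cons y v ih =>
    rw [La_cons]
    by_cases h : y = a <;> simp [h] <;> omega

lemma La_head (v : List A) : ∃ w, La a v ++ [a] = a :: w := by
  induction v with
  | nil => exact ⟨[], rfl⟩
  | cons y v _ =>
    rw [La_cons]
    by_cases h : y = a
    · exact ⟨La a v ++ [a], by simp [h]⟩
    · exact ⟨y :: (La a v ++ [a]), by simp [h]⟩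

lemma La_rev (v : List A) : (La a v ++ [a]).reverse = La a v.reverse ++ [a] := by
  induction v with
  | nil => rfl
  | cons y v ih =>
    have h1 : La a (y :: v) ++ [a] = (if y = a then [a] else [a,y]) ++ (La a v ++ [a]) := by
      rw [La_cons, List.append_assoc]
    rw [h1, List.reverse_append, ih]
    have h2 : (y :: v).reverse = v.reverse ++ [y] := by simp
    rw [h2, La_append]
    by_cases h : y = a
    · subst h; rw [if_pos rfl, La_singleton_pos]; simp
    · rw [if_neg h, La_singleton_neg h]; simp
end La

section EncDec
open Classical
variable {s : ℕ → A}

lemma win_congr {i n n' : ℕ} (h : n = n') : win s i n = win s i n' := by rw [h]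

lemma two_win {i : ℕ} {x y : A} (h : [x, y] = win s i 2) : x = s i ∧ y = s (i + 1) := by
  rw [show (2:ℕ) = 1 + 1 from rfl, win_add, win_one, win_one] at h
  have h1 := (List.cons.injEq _ _ _ _).mp h
  exact ⟨h1.1, ((List.cons.injEq _ _ _ _).mp h1.2).1⟩

lemma enc (hsep : ∀ i, s i = s 0 ∨ s (i + 1) = s 0) :
    ∀ (v : List A) (r : ℕ), v = win (der s) r v.length →
      La (s 0) v ++ [s 0] = win s (tf s r) ((La (s 0) v).length + 1) := by
  intro v
  induction v with
  | nil =>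
    intro r _
    rw [La_nil, List.nil_append]
    simp only [List.length_nil, Nat.zero_add]
    rw [win_one, tf_start hsep]
  | cons y v ih =>
    intro r hv
    have hv' : y :: v = win (der s) r (v.length + 1) := hv
    rw [win_succ'] at hv'
    obtain ⟨hy, hvtail⟩ := (List.cons.injEq _ _ _ _).mp hv'
    have key : La (s 0) (y :: v) ++ [s 0]
        = (if y = s 0 then [s 0] else [s 0, y]) ++ (La (s 0) v ++ [s 0]) := by
      rw [La_cons, List.append_assoc]
    by_cases hcase : s (tf s r + 1) = s 0
    · -- der s r = s 0, block of length 1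
      have hda : der s r = s 0 := der_pos hcase
      have hya : y = s 0 := by rw [hy, hda]
      rw [key, if_pos hya]
      have ihh := ih (r + 1) hvtail
      rw [tf_succ_pos hcase] at ihh
      have hlen : (La (s 0) (y :: v)).length + 1 = 1 + ((La (s 0) v).length + 1) := by
        rw [La_cons, if_pos hya]; simp; omega
      rw [win_congr hlen, win_add, win_one, tf_start hsep, ihh]
    · -- block of length 2
      have hda : der s r = s (tf s r + 1) := der_neg hcase
      have hya : y = s (tf s r + 1) := by rw [hy, hda]
      have hyna : y ≠ s 0 := by rw [hya]; exact hcase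
      rw [key, if_neg hyna]
      have ihh := ih (r + 1) hvtail
      rw [tf_succ_neg hcase] at ihh
      have hlen : (La (s 0) (y :: v)).length + 1 = 2 + ((La (s 0) v).length + 1) := by
        rw [La_cons, if_neg hyna]; simp; omega
      rw [win_congr hlen, win_add, ihh]
      congr 1
      rw [show (2:ℕ) = 1 + 1 from rfl, win_add, win_one, win_one, tf_start hsep, ← hya]
      rfl

lemma dec (hsep : ∀ i, s i = s 0 ∨ s (i + 1) = s 0) :
    ∀ (v : List A) (r : ℕ),
      La (s 0) v ++ [s 0] = win s (tf s r) ((La (s 0) v).length + 1) →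
      v = win (der s) r v.length := by
  intro v
  induction v with
  | nil => intro r _; rfl
  | cons y v ih =>
    intro r h
    have key : La (s 0) (y :: v) ++ [s 0]
        = (if y = s 0 then [s 0] else [s 0, y]) ++ (La (s 0) v ++ [s 0]) := by
      rw [La_cons, List.append_assoc]
    rw [key] at h
    set blk : List A := if y = s 0 then [s 0] else [s 0, y] with hblk
    have hlen : (La (s 0) (y :: v)).length + 1 = blk.length + (La (s 0) v ++ [s 0]).length := by
      rw [La_cons, ← hblk]; simp; omega
    rw [win_congr hlen] at h
    obtain ⟨hb, ht⟩ := win_split h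
    have htlen : (La (s 0) v ++ [s 0]).length = (La (s 0) v).length + 1 := by simp
    by_cases hya : y = s 0
    · -- block [a]
      rw [hblk, if_pos hya] at hb ht
      rw [show ([s 0] : List A).length = 1 from rfl] at ht
      -- first letter of La v ++ [a] is a, hence s (tf r + 1) = s 0
      obtain ⟨w, hw⟩ := La_head (a := s 0) v
      have hfirst : s (tf s r + 1) = s 0 := by
        have h2 : La (s 0) v ++ [s 0] = win s (tf s r + 1) ((La (s 0) v).length + 1) := by
          rw [← htlen]; exact ht
        rw [hw, win_succ'] at h2
        exact ((List.cons.injEq _ _ _ _).mp h2).1.symm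
      have hrec : v = win (der s) (r + 1) v.length := by
        apply ih
        rw [tf_succ_pos hfirst, ← htlen]
        exact ht
      have : y :: v = win (der s) r (v.length + 1) := by
        rw [win_succ', ← hrec, der_pos hfirst, hya]
      exact this
    · -- block [a, y]
      rw [hblk, if_neg hya] at hb ht
      rw [show ([s 0, y] : List A).length = 2 from rfl] at ht
      have h2 := two_win hb
      have hfirst : s (tf s r + 1) ≠ s 0 := by rw [← h2.2]; exact hya
      have hrec : v = win (der s) (r + 1) v.length := by
        apply ih
        rw [tf_succ_neg hfirst, ← htlen]
        exact ht
      have : y :: v = win (der s) r (v.length + 1) := by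
        rw [win_succ', ← hrec, der_neg hfirst, ← h2.2]
      exact this

lemma La_len_tf : ∀ r : ℕ, (La (s 0) (win (der s) 0 r)).length = tf s r := by
  intro r
  induction r with
  | zero => rfl
  | succ r ih =>
    have h1 : win (der s) 0 (r + 1) = win (der s) 0 r ++ [der s r] := by
      rw [win_succ, Nat.zero_add]
    rw [h1, La_append]
    by_cases hcase : s (tf s r + 1) = s 0
    · rw [der_pos hcase, La_singleton_pos, tf_succ_pos hcase]
      simp [ih]
    · rw [der_neg hcase, La_singleton_neg (by exact hcase), tf_succ_neg hcase]
      simp [ih]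

lemma enc0 (hsep : ∀ i, s i = s 0 ∨ s (i + 1) = s 0) (r : ℕ) :
    La (s 0) (win (der s) 0 r) = win s 0 (tf s r) := by
  have h := enc hsep (win (der s) 0 r) 0 (by rw [win_length])
  rw [tf_zero] at h
  rw [win_succ, Nat.zero_add] at h
  have := (List.append_inj h (by simp)).1
  rw [this, La_len_tf]

end EncDec

section DerProps
open Classical
variable {s : ℕ → A}

lemma der_factor_lift (hsep : ∀ i, s i = s 0 ∨ s (i + 1) = s 0)
    {u : List A} (h : FactorOf (der s) u) : FactorOf s (La (s 0) u ++ [s 0]) := by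
  obtain ⟨r, hr⟩ := h
  have he := enc hsep u r hr
  exact factorOf_of_win (by simp) he

lemma der_factor_cons_lift (hsep : ∀ i, s i = s 0 ∨ s (i + 1) = s 0)
    {x : A} {u : List A} (h : FactorOf (der s) (x :: u)) :
    FactorOf s (x :: (La (s 0) u ++ [s 0])) := by
  have hf := der_factor_lift hsep h
  have hkey : La (s 0) (x :: u) ++ [s 0]
      = (if x = s 0 then [s 0] else [s 0, x]) ++ (La (s 0) u ++ [s 0]) := by
    rw [La_cons, List.append_assoc]
  rw [hkey] at hf
  by_cases hx : x = s 0
  · rw [if_pos hx] at hf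
    rw [hx]
    exact hf
  · rw [if_neg hx] at hf
    exact factor_tail hf

lemma der_factor_of_factor (hsep : ∀ i, s i = s 0 ∨ s (i + 1) = s 0)
    {u : List A} (h : FactorOf s (La (s 0) u ++ [s 0])) : FactorOf (der s) u := by
  obtain ⟨q, hq⟩ := h
  have hq2 : La (s 0) u ++ [s 0] = win s q (La (s 0) u ++ [s 0]).length := hq
  have hq' : La (s 0) u ++ [s 0] = win s q ((La (s 0) u).length + 1) :=
    hq2.trans (win_congr (by simp))
  have hqa : s q = s 0 := by
    obtain ⟨w, hw⟩ := La_head (a := s 0) u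
    rw [hw, win_succ'] at hq'
    exact ((List.cons.injEq _ _ _ _).mp hq').1.symm
  obtain ⟨r, hr⟩ := tf_surj hqa
  rw [← hr] at hq'
  exact ⟨r, dec hsep u r hq'⟩

lemma der_prefix_of_prefix (hsep : ∀ i, s i = s 0 ∨ s (i + 1) = s 0)
    {u : List A} (h : PrefixOf s (La (s 0) u ++ [s 0])) : PrefixOf (der s) u := by
  rw [prefixOf_iff] at h
  have hq' : La (s 0) u ++ [s 0] = win s (tf s 0) ((La (s 0) u).length + 1) := by
    rw [tf_zero]
    exact h.trans (win_congr (by simp))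
  rw [prefixOf_iff]
  exact dec hsep u 0 hq'

lemma der_std (hstd : StandardEpisturmian s) : StandardEpisturmian (der s) := by
  have hsep := separating hstd
  constructor
  · intro u hu
    have h1 : FactorOf s (La (s 0) u ++ [s 0]) := der_factor_lift hsep hu
    have h2 := hstd.1 _ h1
    rw [La_rev] at h2
    exact der_factor_of_factor hsep h2
  · rintro u ⟨x, y, hxy, hx, hy⟩
    have cx := der_factor_cons_lift hsep hx
    have cy := der_factor_cons_lift hsep hy
    have hpre := hstd.2 _ ⟨x, y, hxy, cx, cy⟩
    exact der_prefix_of_prefix hsep hpre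

lemma der_aperiodic (hstd : StandardEpisturmian s) (hap : ¬ EventuallyPeriodic s) :
    ¬ EventuallyPeriodic (der s) := by
  have hsep := separating hstd
  rintro ⟨p, hp, N, hper⟩
  apply hap
  set P := tf s (N + p) - tf s N with hP
  have hPle : tf s N ≤ tf s (N + p) := tf_le_of_le (by omega)
  have h1 : ∀ k, N ≤ k → tf s (k + p) = tf s k + P := by
    intro k hk
    induction k, hk using Nat.le_induction with
    | base => omega
    | succ k hk ih =>
      have hd : der s (k + p) = der s k := hper k hk
      by_cases hc : s (tf s k + 1) = s 0
      · have hda : der s k = s 0 := der_pos hc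
        have hc2 : s (tf s (k + p) + 1) = s 0 := der_eq_iff.mp (hd.trans hda)
        have t1 : tf s (k + 1 + p) = tf s (k + p) + 1 := by
          rw [show k + 1 + p = (k + p) + 1 by omega, tf_succ_pos hc2]
        have t2 : tf s (k + 1) = tf s k + 1 := tf_succ_pos hc
        omega
      · have hda : der s k ≠ s 0 := fun h => hc (der_eq_iff.mp h)
        have hc2 : s (tf s (k + p) + 1) ≠ s 0 := by
          intro h2
          exact hda (hd.symm.trans (der_pos h2))
        have t1 : tf s (k + 1 + p) = tf s (k + p) + 2 := by
          rw [show k + 1 + p = (k + p) + 1 by omega, tf_succ_neg hc2]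
        have t2 : tf s (k + 1) = tf s k + 2 := tf_succ_neg hc
        omega
  have hPpos : 0 < P := by
    have := tf_mono (s := s) (show N < N + p by omega)
    omega
  refine ⟨P, hPpos, tf s N, fun n hn => ?_⟩
  obtain ⟨r, hr1, hr2⟩ := exists_block (f := tf s) tf_zero tf_lt_succ n
  have hrN : N ≤ r := by
    by_contra hcon
    have : tf s (r + 1) ≤ tf s N := tf_le_of_le (by omega)
    omega
  have hrp := h1 r hrN
  by_cases hc : s (tf s r + 1) = s 0
  · have t2 : tf s (r + 1) = tf s r + 1 := tf_succ_pos hc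
    have hn' : n = tf s r := by omega
    rw [hn', show tf s r + P = tf s (r + p) by omega, tf_start hsep, tf_start hsep]
  · have t2 : tf s (r + 1) = tf s r + 2 := tf_succ_neg hc
    rcases (by omega : n = tf s r ∨ n = tf s r + 1) with hn' | hn'
    · rw [hn', show tf s r + P = tf s (r + p) by omega, tf_start hsep, tf_start hsep]
    · have hd : der s (r + p) = der s r := hper r hrN
      have hda : der s r ≠ s 0 := fun h => hc (der_eq_iff.mp h)
      have hc2 : s (tf s (r + p) + 1) ≠ s 0 := by
        intro h2
        exact hda (hd.symm.trans (der_pos h2))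
      rw [hn', show tf s r + 1 + P = tf s (r + p) + 1 by omega, ← der_neg hc2, ← der_neg hc, hd]
end DerProps

section Split
variable {s : ℕ → A}

lemma split_end_a (hsep : ∀ i, s i = s 0 ∨ s (i + 1) = s 0)
    {R : List A} (hR : PrefixOf s R) (hne : R.length ≠ 0) (hlast : s (R.length - 1) = s 0) :
    ∃ Q : List A, PrefixOf (der s) Q ∧ La (s 0) Q ++ [s 0] = R ∧ Q.length < R.length := by
  obtain ⟨r, hr⟩ := tf_surj hlast
  refine ⟨win (der s) 0 r, prefixOf_win _ _, ?_, ?_⟩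
  · rw [prefixOf_iff] at hR
    have hRwin : R = win s 0 ((R.length - 1) + 1) := hR.trans (win_congr (by omega))
    rw [win_succ, Nat.zero_add, hlast] at hRwin
    rw [enc0 hsep, hr]
    exact hRwin.symm
  · have := le_tf (s := s) r
    rw [win_length]
    omega

lemma split_end_b (hsep : ∀ i, s i = s 0 ∨ s (i + 1) = s 0)
    {R : List A} (hR : PrefixOf s R) (hne : R.length ≠ 0) (hlast : s (R.length - 1) ≠ s 0) :
    ∃ Q : List A, PrefixOf (der s) Q ∧ La (s 0) Q = R ∧ Q.length < R.length := by
  set q := R.length - 1 with hq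
  have hq0 : q ≠ 0 := by
    intro h
    rw [h] at hlast
    exact hlast rfl
  have hq' : s (q - 1) = s 0 := by
    rcases hsep (q - 1) with h | h
    · exact h
    · rw [show q - 1 + 1 = q by omega] at h
      exact absurd h hlast
  obtain ⟨r, hr⟩ := tf_surj hq'
  have hstep : s (tf s r + 1) ≠ s 0 := by
    rw [hr, show q - 1 + 1 = q by omega]
    exact hlast
  have ht1 : tf s (r + 1) = q + 1 := by
    rw [tf_succ_neg hstep, hr]
    omega
  refine ⟨win (der s) 0 (r + 1), prefixOf_win _ _, ?_, ?_⟩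
  · rw [enc0 hsep, ht1]
    rw [prefixOf_iff] at hR
    rw [hR]
    exact win_congr (by omega)
  · have := le_tf (s := s) r
    rw [win_length]
    omega

end Split

section Main
variable {s : ℕ → A}

set_option linter.deprecated false in
lemma join_app (l1 l2 : List (List A)) : (l1 ++ l2).flatten = l1.flatten ++ l2.flatten := by
  simp

lemma win_elem {s : ℕ → A} {u : List A} {i n : ℕ} (h : u = win s i n) {j : ℕ} (hj : j < n) :
    u[j]? = some (s (i + j)) := by rw [h, win_get?, if_pos hj]

lemma Tstar : ∀ (n : ℕ) (s : ℕ → A) (c : A) (R : ℕ → List A) (e : ℕ → ℕ),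
    StandardEpisturmian s → ¬ EventuallyPeriodic s →
    (∀ k, PrefixOf s (R k)) → (∀ k, 1 ≤ e k) →
    (∀ m, PrefixOf s (((List.range m).map fun k => R k ++ List.replicate (e k) c).flatten)) →
    (R 0).length + e 0 ≤ n → False := by
  intro n
  induction n using Nat.strong_induction_on with
  | _ n IH =>
  intro s c R e hstd hap hR he hfac hn
  classical
  have hsep := separating hstd
  set piece : ℕ → List A := fun k => R k ++ List.replicate (e k) c with hpiece
  set N : ℕ → ℕ := fun m => (((List.range m).map piece).flatten).length with hNdef
  have hN0 : N 0 = 0 := by simp [hNdef]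
  have hNs : ∀ k, N (k+1) = N k + ((R k).length + e k) := by
    intro k
    simp [hNdef, List.range_succ, hpiece]
  have hNlt : ∀ k, N k < N (k+1) := by
    intro k
    have := he k
    rw [hNs]
    omega
  have hNmono : ∀ a b, a ≤ b → N a ≤ N b := by
    intro a b h
    induction b, h using Nat.le_induction with
    | base => omega
    | succ b hb ih => have := hNlt b; omega
  have hNge : ∀ k, k ≤ N k := by
    intro k
    induction k with
    | zero => omega
    | succ k ih => have := hNlt k; omega
  have hjoin : ∀ m, ((List.range m).map piece).flatten = win s 0 (N m) := by
    intro m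
    have h1 := hfac m
    rw [prefixOf_iff] at h1
    exact h1
  have hpieceWin : ∀ k, piece k = win s (N k) ((R k).length + e k) := by
    intro k
    have h1 := hjoin (k+1)
    rw [List.range_succ, List.map_append, join_app] at h1
    have h2 : ((List.range k).map piece).flatten ++ piece k = win s 0 (N (k+1)) := by
      rw [← h1]
      simp
    rw [hjoin k, win_congr (hNs k), win_add] at h2
    have h3 := List.append_inj h2 (by simp)
    rw [Nat.zero_add] at h3
    exact h3.2
  have hRwin : ∀ k, R k = win s (N k) ((R k).length) := by
    intro k
    have h1 := hpieceWin k
    rw [hpiece] at h1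
    have h2 : R k ++ List.replicate (e k) c
        = win s (N k) ((R k).length + (List.replicate (e k) c).length) := by
      simp only [List.length_replicate]
      exact h1
    exact (win_split h2).1
  have hrepWin : ∀ k, List.replicate (e k) c = win s (N k + (R k).length) (e k) := by
    intro k
    have h1 := hpieceWin k
    rw [hpiece] at h1
    have h2 : R k ++ List.replicate (e k) c
        = win s (N k) ((R k).length + (List.replicate (e k) c).length) := by
      simp only [List.length_replicate]
      exact h1
    have h3 := (win_split h2).2
    simpa using h3
  have hAletter : ∀ k j, j < (R k).length → s (N k + j) = s j := by
    intro k j hj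
    have h1 := win_elem (hRwin k) hj
    have h2 := win_elem ((prefixOf_iff).mp (hR k)) hj
    rw [h1] at h2
    have h3 : s (N k + j) = s (0 + j) := by
      simpa using h2
    simpa using h3
  have hCletter : ∀ k i, i < e k → s (N k + (R k).length + i) = c := by
    intro k i hi
    have h1 := win_elem (hrepWin k) hi
    rw [List.getElem?_replicate, if_pos hi] at h1
    have h3 : c = s (N k + (R k).length + i) := by
      simpa using h1
    exact h3.symm
  have hfirst : ∀ k, (R k).length ≠ 0 → s (N k) = s 0 := by
    intro k h
    have := hAletter k 0 (by omega)
    simpa using this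
  by_cases hc : c = s 0
  · -- ===================== case c = s 0 =====================
    subst hc
    have hex : ∃ q, s q ≠ s 0 := by
      by_contra hcon
      push_neg at hcon
      exact hap ⟨1, one_pos, 0, fun q _ => by rw [hcon (q+1), hcon q]⟩
    have hb : s (Nat.find hex) ≠ s 0 := Nat.find_spec hex
    set m := Nat.find hex with hmdef
    have hmlt : ∀ i, i < m → s i = s 0 := by
      intro i hi
      have := Nat.find_min hex hi
      tauto
    have hm0 : m ≠ 0 := by
      intro h
      rw [h] at hb
      exact hb rfl
    have hshort : ∀ j q, (R j).length ≤ m → N j ≤ q → q < N (j+1) → s q = s 0 := by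
      intro j q hRj h1 h2
      rw [hNs] at h2
      rcases lt_or_ge (q - N j) (R j).length with hlt | hge
      · have h3 := hAletter j (q - N j) hlt
        rw [show N j + (q - N j) = q by omega] at h3
        rw [h3]
        exact hmlt _ (by omega)
      · have h3 := hCletter j (q - N j - (R j).length) (by omega)
        rw [show N j + (R j).length + (q - N j - (R j).length) = q by omega] at h3
        exact h3
    have hinf : ∀ k, ∃ k', k ≤ k' ∧ m < (R k').length := by
      intro k
      by_contra hcon
      push_neg at hcon
      apply hap
      refine ⟨1, one_pos, N k, fun q hq => ?_⟩
      have hall : ∀ q', N k ≤ q' → s q' = s 0 := by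
        intro q' hq'
        obtain ⟨j, hj1, hj2⟩ := exists_block hN0 hNlt q'
        have hjk : k ≤ j := by
          by_contra hcon2
          have := hNmono (j+1) k (by omega)
          omega
        exact hshort j q' (hcon j hjk) hj1 hj2
      rw [hall (q+1) (by omega), hall q hq]
    have hlong0 : m < (R 0).length := by
      by_contra hcon
      push_neg at hcon
      have hex1 : ∃ k, m < (R k).length := (hinf 0).imp (fun k h => h.2)
      have hk1long : m < (R (Nat.find hex1)).length := Nat.find_spec hex1
      set k1 := Nat.find hex1 with hk1def
      have hk1min : ∀ j, j < k1 → (R j).length ≤ m := by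
        intro j hj
        have := Nat.find_min hex1 hj
        omega
      have hk1pos : k1 ≠ 0 := by
        intro h
        rw [h] at hk1long
        omega
      have hall : ∀ q, q < N k1 + m → s q = s 0 := by
        intro q hq
        rcases lt_or_ge q (N k1) with hlt | hge
        · obtain ⟨j, hj1, hj2⟩ := exists_block hN0 hNlt q
          have hjlt : j < k1 := by
            by_contra hcon2
            have := hNmono k1 j (by omega)
            omega
          exact hshort j q (hk1min j hjlt) hj1 hj2
        · have h3 := hAletter k1 (q - N k1) (by omega)
          rw [show N k1 + (q - N k1) = q by omega] at h3
          rw [h3]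
          exact hmlt _ (by omega)
      exact hb (hall m (by have := hNge k1; omega))
    have hlong : ∀ k, m < (R k).length := by
      intro k
      by_contra hcon
      push_neg at hcon
      have hk0 : k ≠ 0 := by
        intro h
        rw [h] at hcon
        omega
      obtain ⟨k0, hk0'⟩ := Nat.exists_eq_succ_of_ne_zero hk0
      have hex2 : ∃ j, k + 1 ≤ j ∧ m < (R j).length := by
        obtain ⟨j, h1, h2⟩ := hinf (k+1)
        exact ⟨j, h1, h2⟩
      have hk2spec : k + 1 ≤ Nat.find hex2 ∧ m < (R (Nat.find hex2)).length := Nat.find_spec hex2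
      set k2 := Nat.find hex2 with hk2def
      have hk2min : ∀ j, k + 1 ≤ j → j < k2 → (R j).length ≤ m := by
        intro j h1 h2
        have h3 := Nat.find_min hex2 h2
        push_neg at h3
        exact h3 h1
      apply no_long_run hstd hmlt hb (N k - 1)
      intro j hj
      have hNk1 : 1 ≤ N k := by have := hNge k; omega
      rcases Nat.eq_zero_or_pos j with hj0 | hjpos
      · subst hj0
        have h3 := hCletter k0 (e k0 - 1) (by have := he k0; omega)
        rw [show N k0 + (R k0).length + (e k0 - 1) = N k - 1 + 0 by
          rw [hk0']; rw [hNs k0]; have := he k0; omega] at h3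
        exact h3
      · set q := N k - 1 + j with hqdef
        have hq1 : N k ≤ q := by omega
        have hNkk2 : N (k+1) ≤ N k2 := hNmono _ _ hk2spec.1
        have hq2 : q < N k2 + m := by
          have h4 := hNlt k
          have h5 : q ≤ N k + m := by omega
          omega
        rcases lt_or_ge q (N k2) with hcase1 | hcase2
        · obtain ⟨j', hj1, hj2⟩ := exists_block hN0 hNlt q
          have hja : k ≤ j' := by
            by_contra hcon2
            have := hNmono (j'+1) k (by omega)
            omega
          have hjb : j' < k2 := by
            by_contra hcon2
            have := hNmono k2 j' (by omega)
            omega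
          have hRj' : (R j').length ≤ m := by
            rcases eq_or_lt_of_le hja with h | h
            · rw [← h]; exact hcon
            · exact hk2min j' (by omega) hjb
          exact hshort j' q hRj' hj1 hj2
        · have h3 := hAletter k2 (q - N k2) (by omega)
          rw [show N k2 + (q - N k2) = q by omega] at h3
          rw [h3]
          exact hmlt _ (by omega)
    have hgood : ∀ k, e k = 1 ∧ s ((R k).length - 1) ≠ s 0 := by
      intro k
      have claim1 : s ((R k).length - 1) = s 0 → False := by
        intro hsl
        apply no_long_run hstd hmlt hb (N k + (R k).length - 1)
        intro j hj
        have hRk1 : 1 ≤ (R k).length := by have := hlong k; omega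
        set p := N k + (R k).length - 1 + j with hpdef
        rcases Nat.eq_zero_or_pos j with hj0 | hjpos
        · subst hj0
          have h3 := hAletter k ((R k).length - 1) (by omega)
          rw [show N k + ((R k).length - 1) = N k + (R k).length - 1 + 0 by omega] at h3
          rw [h3]
          exact hsl
        · rcases lt_or_ge p (N (k+1)) with hcase1 | hcase2
          · have h3 := hCletter k (p - (N k + (R k).length)) (by rw [hNs] at hcase1; omega)
            rw [show N k + (R k).length + (p - (N k + (R k).length)) = p by omega] at h3
            exact h3
          · have hlongk1 := hlong (k+1)
            have h3 := hAletter (k+1) (p - N (k+1)) (by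
              have h5 : p ≤ N k + (R k).length + m := by omega
              have h6 := hNs k
              have := he k
              omega)
            rw [show N (k+1) + (p - N (k+1)) = p by omega] at h3
            rw [h3]
            apply hmlt
            have h6 := hNs k
            have := he k
            omega
      have claim2 : 2 ≤ e k → False := by
        intro he2
        apply no_long_run hstd hmlt hb (N k + (R k).length)
        intro j hj
        set p := N k + (R k).length + j with hpdef
        rcases lt_or_ge p (N (k+1)) with hcase1 | hcase2
        · have h3 := hCletter k j (by rw [hNs] at hcase1; omega)
          exact h3
        · have hlongk1 := hlong (k+1)
          have h3 := hAletter (k+1) (p - N (k+1)) (by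
            have h6 := hNs k
            omega)
          rw [show N (k+1) + (p - N (k+1)) = p by omega] at h3
          rw [h3]
          apply hmlt
          have h6 := hNs k
          omega
      have he1 : e k = 1 := by
        have := he k
        by_contra hcon
        exact claim2 (by omega)
      exact ⟨he1, fun h => claim1 h⟩
    have hsplit : ∀ k, ∃ Q : List A, PrefixOf (der s) Q ∧ La (s 0) Q = R k
        ∧ Q.length < (R k).length :=
      fun k => split_end_b hsep (hR k) (by have := hlong k; omega) (hgood k).2
    choose Q hQpre hQLa hQlen using hsplit
    have hLajoin : ∀ mm,
        La (s 0) (((List.range mm).map fun k => Q k ++ List.replicate 1 (s 0)).flatten)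
          = win s 0 (N mm) := by
      intro mm
      induction mm with
      | zero => rw [hN0]; simp [La_nil, win_zero]
      | succ mm ih =>
        rw [List.range_succ, List.map_append, join_app]
        have hsingle : ((([mm] : List ℕ).map fun k => Q k ++ List.replicate 1 (s 0)).flatten)
            = Q mm ++ [s 0] := by simp
        rw [hsingle, La_append, ih, La_append, hQLa, La_singleton_pos]
        have hp : piece mm = R mm ++ [s 0] := by
          rw [hpiece]
          simp [(hgood mm).1]
        have hw : win s 0 (N (mm+1)) = win s 0 (N mm) ++ win s (N mm) ((R mm).length + e mm) := by
          rw [win_congr (hNs mm), win_add, Nat.zero_add]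
        rw [← hp, hpieceWin mm]
        exact hw.symm
    have hfac' : ∀ mm, PrefixOf (der s)
        (((List.range mm).map fun k => Q k ++ List.replicate 1 (s 0)).flatten) := by
      intro mm
      apply der_prefix_of_prefix hsep
      rw [hLajoin mm]
      have h1 : s (N mm) = s 0 := hfirst mm (by have := hlong mm; omega)
      have h2 : win s 0 (N mm) ++ [s 0] = win s 0 (N mm + 1) := by
        rw [win_succ, Nat.zero_add, h1]
      rw [h2]
      exact prefixOf_win s (N mm + 1)
    have hmeas : (Q 0).length + 1 < n := by
      have h1 := hQlen 0
      have h2 := (hgood 0).1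
      omega
    exact IH ((Q 0).length + 1) hmeas (der s) (s 0) Q (fun _ => 1)
      (der_std hstd) (der_aperiodic hstd hap) hQpre (fun _ => le_refl 1) hfac' (le_refl _)
  · have hRne : ∀ k, (R k).length ≠ 0 := by
      intro k
      cases k with
      | zero =>
        intro h
        have h1 := hCletter 0 0 (he 0)
        rw [h, hN0] at h1
        have h1' : s 0 = c := by simpa using h1
        exact hc h1'.symm
      | succ k =>
        intro h
        have h1 := hCletter (k+1) 0 (he (k+1))
        rw [h] at h1
        have h1' : s (N (k+1)) = c := by simpa using h1
        have h2 := hCletter k (e k - 1) (by have := he k; omega)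
        have h2' : s (N (k+1) - 1) = c := by
          rw [show N (k+1) - 1 = N k + (R k).length + (e k - 1) by
            rw [hNs]; have := he k; omega]
          exact h2
        have hge1 : 1 ≤ N (k+1) := by have := hNge (k+1); omega
        rcases hsep (N (k+1) - 1) with h3 | h3
        · rw [h2'] at h3; exact hc h3
        · rw [show N (k+1) - 1 + 1 = N (k+1) by omega, h1'] at h3
          exact hc h3
    have he1 : ∀ k, e k = 1 := by
      intro k
      by_contra hcon
      have he2 : 2 ≤ e k := by have := he k; omega
      have h1 : s (N k + (R k).length) = c := by
        have := hCletter k 0 (by omega)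
        simpa using this
      have h2 : s (N k + (R k).length + 1) = c := hCletter k 1 (by omega)
      rcases hsep (N k + (R k).length) with h3 | h3
      · rw [h1] at h3; exact hc h3
      · rw [h2] at h3; exact hc h3
    have hlast : ∀ k, s ((R k).length - 1) = s 0 := by
      intro k
      have hk1 : 1 ≤ (R k).length := by have := hRne k; omega
      have hA1 := hAletter k ((R k).length - 1) (by omega)
      have hC1' : s (N k + ((R k).length - 1) + 1) = c := by
        rw [show N k + ((R k).length - 1) + 1 = N k + (R k).length + 0 by omega]
        exact hCletter k 0 (he k)
      rcases hsep (N k + ((R k).length - 1)) with h3 | h3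
      · rw [hA1] at h3; exact h3
      · rw [hC1'] at h3; exact absurd h3 hc
    have hsplit : ∀ k, ∃ Q : List A, PrefixOf (der s) Q ∧ La (s 0) Q ++ [s 0] = R k
        ∧ Q.length < (R k).length :=
      fun k => split_end_a hsep (hR k) (hRne k) (hlast k)
    choose Q hQpre hQLa hQlen using hsplit
    have hLajoin : ∀ mm,
        La (s 0) (((List.range mm).map fun k => Q k ++ List.replicate 1 c).flatten)
          = win s 0 (N mm) := by
      intro mm
      induction mm with
      | zero => rw [hN0]; simp [La_nil, win_zero]
      | succ mm ih =>
        rw [List.range_succ, List.map_append, join_app]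
        have hsingle : ((([mm] : List ℕ).map fun k => Q k ++ List.replicate 1 c).flatten)
            = Q mm ++ [c] := by simp
        rw [hsingle, La_append, ih, La_append, La_singleton_neg hc]
        have hp : La (s 0) (Q mm) ++ [s 0, c] = piece mm := by
          rw [hpiece]
          show La (s 0) (Q mm) ++ [s 0, c] = R mm ++ List.replicate (e mm) c
          rw [he1 mm, ← hQLa mm]
          simp
        have hw : win s 0 (N (mm+1)) = win s 0 (N mm) ++ win s (N mm) ((R mm).length + e mm) := by
          rw [win_congr (hNs mm), win_add, Nat.zero_add]
        rw [hp, hpieceWin mm]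
        exact hw.symm
    have hfac' : ∀ mm, PrefixOf (der s)
        (((List.range mm).map fun k => Q k ++ List.replicate 1 c).flatten) := by
      intro mm
      apply der_prefix_of_prefix hsep
      rw [hLajoin mm]
      have h1 : s (N mm) = s 0 := hfirst mm (hRne mm)
      have h2 : win s 0 (N mm) ++ [s 0] = win s 0 (N mm + 1) := by
        rw [win_succ, Nat.zero_add, h1]
      rw [h2]
      exact prefixOf_win s (N mm + 1)
    have hmeas : (Q 0).length + 1 < n := by
      have h1 := hQlen 0
      have h2 := he 0
      omega
    exact IH ((Q 0).length + 1) hmeas (der s) c Q (fun _ => 1)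
      (der_std hstd) (der_aperiodic hstd hap) hQpre (fun _ => le_refl 1) hfac' (le_refl _)

end Main
end StmtAux



/-- In a factorization of an aperiodic standard episturmian word into non-empty prefixes,
two blocks end in different letters. -/
theorem stmt_18 {A : Type*} [Fintype A] (s : ℕ → A)
    (hstd : StandardEpisturmian s) (hap : ¬ EventuallyPeriodic s)
    (U : ℕ → List A) (hfac : Factorization s U) (hpre : ∀ i, PrefixOf s (U i)) :
    ∃ i j : ℕ, i ≠ j ∧ (U i).getLast? ≠ (U j).getLast? := by
  classical
  by_contra hcon
  push_neg at hcon
  obtain ⟨hne, hjoins⟩ := hfac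
  obtain ⟨x, hx⟩ : ∃ x, (U 0).getLast? = some x := by
    cases hgl : (U 0).getLast? with
    | none => exact absurd (List.getLast?_eq_none_iff.mp hgl) (hne 0)
    | some x => exact ⟨x, rfl⟩
  have hall : ∀ i, (U i).getLast? = some x := by
    intro i
    by_cases h : i = 0
    · rw [h]; exact hx
    · rw [hcon i 0 h]; exact hx
  have hsplit : ∀ i, ∃ P, U i = P ++ [x] := by
    intro i
    exact List.getLast?_eq_some_iff.mp (hall i)
  choose P hP using hsplit
  have hPpre : ∀ i, PrefixOf s (P i) := by
    intro i
    have h1 := hpre i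
    rw [StmtAux.prefixOf_iff] at h1
    rw [hP i] at h1
    have h2 : P i ++ [x] = StmtAux.win s 0 ((P i).length + 1) :=
      h1.trans (StmtAux.win_congr (by simp))
    rw [StmtAux.win_succ, Nat.zero_add] at h2
    have h3 := (List.append_inj h2 (by simp)).1
    rw [StmtAux.prefixOf_iff]
    exact h3
  have hfac2 : ∀ m, PrefixOf s
      (((List.range m).map fun k => P k ++ List.replicate 1 x).flatten) := by
    intro m
    have heq : (fun k => P k ++ List.replicate 1 x) = U := by
      funext k
      rw [hP k]
      simp
    rw [heq]
    exact hjoins m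
  exact StmtAux.Tstar ((P 0).length + 1) s x P (fun _ => 1) hstd hap hPpre
    (fun _ => le_refl 1) hfac2 (le_refl _)
end

section
/- Let s be an aperiodic standard episturmian word over a finite alphabet with k distinct letters occurring in s. Then there is a coloring of the non-empty factors of s by k+1 colors such that no factorization of s into non-empty factors is monochromatic. -/
section Aux
variable {A : Type*}

/-- Prepend a finite word to an infinite word. -/
def appW (w : List A) (a : ℕ → A) : ℕ → A :=
  fun n => if h : n < w.length then w[n] else a (n - w.length)

/-- Lexicographic-style strict order on infinite words induced by `r`. -/
def LtW (r : A → A → Prop) (a b : ℕ → A) : Prop :=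
  ∃ n, (∀ m < n, a m = b m) ∧ r (a n) (b n)

lemma appW_lt {w : List A} {a : ℕ → A} {m : ℕ} (h : m < w.length) :
    appW w a m = w[m] := dif_pos h

lemma appW_add {w : List A} {a : ℕ → A} (n : ℕ) :
    appW w a (w.length + n) = a n := by
  rw [appW, dif_neg (by omega)]
  congr 1
  omega

lemma appW_ge {w : List A} {a : ℕ → A} {m : ℕ} (h : w.length ≤ m) :
    appW w a m = a (m - w.length) := dif_neg (by omega)

lemma appW_append (v w : List A) (a : ℕ → A) :
    appW (v ++ w) a = appW v (appW w a) := by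
  funext n
  by_cases h1 : n < v.length
  · rw [appW, appW, dif_pos h1, dif_pos (by simp; omega)]
    rw [List.getElem_append_left h1]
  · by_cases h2 : n < v.length + w.length
    · rw [appW, appW, appW, dif_pos (by simp; omega), dif_neg h1, dif_pos (by omega)]
      rw [List.getElem_append_right (by omega)]
    · rw [appW, appW, appW, dif_neg (by simp; omega), dif_neg h1, dif_neg (by omega)]
      congr 1
      simp
      omega

lemma LtW_mono {r : A → A → Prop} {a b : ℕ → A} (w : List A) (h : LtW r a b) :
    LtW r (appW w a) (appW w b) := by
  obtain ⟨n, hn, hr⟩ := h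
  refine ⟨w.length + n, ?_, ?_⟩
  · intro m hm
    by_cases h1 : m < w.length
    · rw [appW_lt h1, appW_lt h1]
    · rw [appW_ge (by omega), appW_ge (by omega)]
      exact hn _ (by omega)
  · rw [appW_add, appW_add]
    exact hr

lemma LtW_trans {r : A → A → Prop} (ht : ∀ a b c, r a b → r b c → r a c)
    {a b c : ℕ → A} (h1 : LtW r a b) (h2 : LtW r b c) : LtW r a c := by
  obtain ⟨n, hn, hrn⟩ := h1
  obtain ⟨m, hm, hrm⟩ := h2
  rcases lt_trichotomy n m with h | h | h
  · exact ⟨n, fun q hq => (hn q hq).trans (hm q (hq.trans h)),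
      by rw [← hm n h]; exact hrn⟩
  · subst h
    exact ⟨n, fun q hq => (hn q hq).trans (hm q hq), ht _ _ _ hrn hrm⟩
  · exact ⟨m, fun q hq => (hn q (hq.trans h)).trans (hm q hq),
      by rw [hn m h]; exact hrm⟩

lemma LtW_limit {r : A → A → Prop} (hirr : ∀ a, ¬ r a a) (hasym : ∀ a b, r a b → ¬ r b a)
    {x y : ℕ → A} (h : ∀ N, ∃ a : ℕ → A, (∀ m < N, a m = y m) ∧ LtW r a x) :
    ¬ LtW r x y := by
  rintro ⟨n, hn, hrn⟩
  obtain ⟨a, hay, p, hp, hrp⟩ := h (n + 1)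
  rcases lt_trichotomy p n with h' | h' | h'
  · have : a p = x p := (hay p (by omega)).trans (hn p h').symm
    rw [this] at hrp
    exact hirr _ hrp
  · subst h'
    rw [hay p (by omega)] at hrp
    exact hasym _ _ hrn hrp
  · have h1 : a n = x n := hp n h'
    have h2 : a n = y n := hay n (by omega)
    rw [← h1, h2] at hrn
    exact hirr _ hrn

lemma LtW_flip {r : A → A → Prop} {a b : ℕ → A} :
    LtW (fun x y => r y x) a b ↔ LtW r b a := by
  constructor
  · rintro ⟨n, hn, hr⟩
    exact ⟨n, fun m hm => (hn m hm).symm, hr⟩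
  · rintro ⟨n, hn, hr⟩
    exact ⟨n, fun m hm => (hn m hm).symm, hr⟩

lemma LtW_tri {r : A → A → Prop} (htot : ∀ a b : A, a ≠ b → r a b ∨ r b a)
    {a b : ℕ → A} (hne : a ≠ b) : LtW r a b ∨ LtW r b a := by
  have hex : ∃ n, a n ≠ b n := by
    by_contra h
    push_neg at h
    exact hne (funext h)
  classical
  have hn := Nat.find_spec hex
  have hmin : ∀ m < Nat.find hex, a m = b m := fun m hm => not_not.mp (Nat.find_min hex hm)
  rcases htot _ _ hn with h | h
  · exact Or.inl ⟨_, hmin, h⟩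
  · exact Or.inr ⟨_, fun m hm => (hmin m hm).symm, h⟩

lemma prefixGet {s : ℕ → A} {u : List A} (hu : PrefixOf s u) (m : ℕ) (h : m < u.length) :
    u[m] = s m := by
  rw [List.getElem_of_eq hu]
  simp

lemma appW_eq_periodic {x : ℕ → A} {u : List A} (hne : u ≠ []) (h : appW u x = x) :
    EventuallyPeriodic x := by
  refine ⟨u.length, List.length_pos_iff.mpr hne, 0, fun n _ => ?_⟩
  have h1 := congrFun h (u.length + n)
  rw [appW_add] at h1
  rw [Nat.add_comm, h1]

lemma LtW_shift {r : A → A → Prop} (hirr : ∀ a, ¬ r a a) {x : ℕ → A} {u : List A}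
    (hu : PrefixOf x u) (h : LtW r (appW u x) x) :
    LtW r x (fun p => x (p + u.length)) := by
  obtain ⟨n, hn, hrn⟩ := h
  have hL : u.length ≤ n := by
    by_contra hc
    push_neg at hc
    rw [appW_lt hc, prefixGet hu n hc] at hrn
    exact hirr _ hrn
  refine ⟨n - u.length, ?_, ?_⟩
  · intro m hm
    have h1 := hn (u.length + m) (by omega)
    rw [appW_add] at h1
    show x m = x (m + u.length)
    rw [Nat.add_comm]
    exact h1
  · rw [appW_ge hL] at hrn
    show r (x (n - u.length)) (x (n - u.length + u.length))
    have : n - u.length + u.length = n := by omega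
    rw [this]
    exact hrn

end Aux
section Master
variable {A : Type*}

def Vblocks (U : ℕ → List A) (n : ℕ) : List A :=
  ((List.range n).map fun i => U (i + 1)).flatten

lemma Vblocks_succ (U : ℕ → List A) (n : ℕ) :
    Vblocks U (n + 1) = Vblocks U n ++ U (n + 1) := by
  simp [Vblocks, List.range_succ]

lemma master {r : A → A → Prop} (hirr : ∀ a, ¬ r a a) (hasym : ∀ a b, r a b → ¬ r b a)
    (htrans : ∀ a b c, r a b → r b c → r a c)
    {s : ℕ → A} {U : ℕ → List A} (hfac : Factorization s U)
    (hall : ∀ i, LtW r (appW (U i) s) s) : False := by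
  obtain ⟨hne, hpre⟩ := hfac
  have hU0 : PrefixOf s (U 0) := by
    have := hpre 1
    simpa [List.range_succ] using this
  set L := (U 0).length with hL
  -- the blocks `U 1 ++ ⋯ ++ U n` concatenate to prefixes past `U 0`
  have hprefix : ∀ n, PrefixOf s (U 0 ++ Vblocks U n) := by
    intro n
    have := hpre (n + 1)
    have heq : ((List.range (n + 1)).map U).flatten = U 0 ++ Vblocks U n := by
      simp only [Vblocks, List.range_succ_eq_map, List.map_cons, List.map_map]
      rfl
    rwa [heq] at this
  have hVlen : ∀ n, n ≤ (Vblocks U n).length := by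
    intro n
    induction n with
    | zero => simp
    | succ n ih =>
      rw [Vblocks_succ, List.length_append]
      have : 1 ≤ (U (n + 1)).length := List.length_pos_iff.mpr (hne _)
      omega
  have hVlt : ∀ n, LtW r (appW (Vblocks U (n + 1)) s) s := by
    intro n
    induction n with
    | zero =>
      have h1 : Vblocks U 1 = U 1 := by simp [Vblocks, List.range_succ]
      rw [h1]
      exact hall 1
    | succ n ih =>
      rw [Vblocks_succ, appW_append]
      exact LtW_trans htrans (LtW_mono _ (hall (n + 2))) ih
  have hagree : ∀ n m, m < (Vblocks U n).length → appW (Vblocks U n) s m = s (m + L) := by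
    intro n m hm
    have hlen : L + m < (U 0 ++ Vblocks U n).length := by
      rw [List.length_append]; omega
    have h1 : (U 0 ++ Vblocks U n)[L + m] = s (L + m) := prefixGet (hprefix n) _ hlen
    have h2 : (U 0 ++ Vblocks U n)[L + m] = (Vblocks U n)[m] := by
      rw [List.getElem_append_right (by omega)]
      congr 1
      omega
    rw [appW_lt hm, ← h2, h1, Nat.add_comm]
  have hnot : ¬ LtW r s (fun p => s (p + L)) := by
    apply LtW_limit hirr hasym
    intro N
    refine ⟨appW (Vblocks U (N + 1)) s, ?_, hVlt N⟩
    intro m hm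
    exact hagree (N + 1) m (by have := hVlen (N + 1); omega)
  exact hnot (LtW_shift hirr hU0 (hall 0))

end Master

/-- With `k` the number of letters occurring in `s`, there is a `(k+1)`-coloring of the
factors of an aperiodic standard episturmian word avoiding monochromatic factorizations. -/
theorem stmt_19 {A : Type*} [Fintype A] [DecidableEq A] (s : ℕ → A)
    (hstd : StandardEpisturmian s) (hap : ¬ EventuallyPeriodic s) :
    ∃ c : List A → Fin ((Set.range s).toFinite.toFinset.card + 1),
      ∀ U : ℕ → List A, Factorization s U → ∃ i j : ℕ, c (U i) ≠ c (U j) := by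
  classical
  set k := (Set.range s).toFinite.toFinset.card with hk
  have hcard : 2 ≤ k := by
    by_contra h
    push_neg at h
    apply hap
    refine ⟨1, one_pos, 0, fun n _ => ?_⟩
    have h1 : s (n + 1) ∈ (Set.range s).toFinite.toFinset := by simp
    have h2 : s n ∈ (Set.range s).toFinite.toFinset := by simp
    exact Finset.card_le_one.mp (by omega) _ h1 _ h2
  set e := Fintype.equivFin A with he
  set r : A → A → Prop := fun a b => e a < e b with hr
  have hirr : ∀ a, ¬ r a a := fun a => lt_irrefl _
  have hasym : ∀ a b : A, r a b → ¬ r b a := fun a b h h' => absurd h (not_lt.mpr h'.le)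
  have htrans : ∀ a b c : A, r a b → r b c → r a c := fun a b c h1 h2 => lt_trans h1 h2
  have htot : ∀ a b : A, a ≠ b → r a b ∨ r b a := by
    intro a b h
    rcases lt_or_gt_of_ne (fun hh : e a = e b => h (e.injective hh)) with h' | h'
    · exact Or.inl h'
    · exact Or.inr h'
  have h0 : (0 : ℕ) < k + 1 := by omega
  have h1 : (1 : ℕ) < k + 1 := by omega
  have h2 : (2 : ℕ) < k + 1 := by omega
  refine ⟨fun u => if PrefixOf s u ∧ u ≠ [] then
      (if LtW r (appW u s) s then ⟨1, h1⟩ else ⟨2, h2⟩) else ⟨0, h0⟩, ?_⟩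
  intro U hU
  by_contra hmono
  push_neg at hmono
  have hU0pre : PrefixOf s (U 0) := by
    have := hU.2 1
    simpa [List.range_succ] using this
  have hU0ne : U 0 ≠ [] := hU.1 0
  have hnei : ∀ i, appW (U i) s ≠ s := by
    intro i h
    exact hap (appW_eq_periodic (hU.1 i) h)
  by_cases hc : LtW r (appW (U 0) s) s
  · have hcol0 : (if PrefixOf s (U 0) ∧ U 0 ≠ [] then
        (if LtW r (appW (U 0) s) s then (⟨1, h1⟩ : Fin (k + 1)) else ⟨2, h2⟩)
        else ⟨0, h0⟩) = ⟨1, h1⟩ := by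
      rw [if_pos ⟨hU0pre, hU0ne⟩, if_pos hc]
    have key : ∀ i, LtW r (appW (U i) s) s := by
      intro i
      have h := (hmono i 0).trans hcol0
      split_ifs at h with hp hlt
      · exact hlt
      · simp at h
      · simp [Fin.ext_iff] at h
    exact master hirr hasym htrans hU key
  · have hcol0 : (if PrefixOf s (U 0) ∧ U 0 ≠ [] then
        (if LtW r (appW (U 0) s) s then (⟨1, h1⟩ : Fin (k + 1)) else ⟨2, h2⟩)
        else ⟨0, h0⟩) = ⟨2, h2⟩ := by
      rw [if_pos ⟨hU0pre, hU0ne⟩, if_neg hc]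
    have key : ∀ i, LtW (fun a b => r b a) (appW (U i) s) s := by
      intro i
      have h := (hmono i 0).trans hcol0
      split_ifs at h with hp hlt
      · simp at h
      · rw [LtW_flip]
        rcases LtW_tri htot (hnei i) with h' | h'
        · exact absurd h' hlt
        · exact h'
      · simp [Fin.ext_iff] at h
    have hirr' : ∀ a : A, ¬ (fun a b => r b a) a a := fun a => hirr a
    have hasym' : ∀ a b : A, (fun a b => r b a) a b → ¬ (fun a b => r b a) b a :=
      fun a b hab hba => hasym b a hab hba
    have htrans' : ∀ a b c : A, (fun a b => r b a) a b → (fun a b => r b a) b c →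
        (fun a b => r b a) a c := fun a b c hab hbc => htrans c b a hbc hab
    exact master (r := fun a b => r b a) hirr' hasym' htrans' hU key
end
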